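/- With W, σ, J as above, the space S(W_R) of symmetric endomorphisms of the real inner product space W_R decomposes orthogonally as S(W_R) = H_+(W) ⊕ H_−(W) ⊕ σH_+(W) ⊕ JσH_+(W). -/

import Mathlib

/-! Let `J` be multiplication by `i` on `W_ℝ`. Then `J⁻¹ = -J`, `σ⁻¹ = σ` and `σJ = -Jσ`, so
conjugation by `J` and conjugation by `σ` are commuting involutions of `End_ℝ(W)`; both preserve
symmetric operators because `σ` is symmetric and `J` skew for `Re⟨·,·⟩`. The four subspaces are
exactly the joint `±1`-eigenspaces of these two involutions inside `S(W_ℝ)`, whence the unique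
decomposition. Any two of the subspaces lie in opposite eigenspaces of one of the conjugations,
which then sends `B C` to `-B C`; since conjugation preserves the trace, `trace (B C) = 0`. -/

section

variable {W : Type*} [NormedAddCommGroup W] [InnerProductSpace ℂ W]

/-- A real-linear endomorphism of `W_ℝ` is symmetric iff it is symmetric for the real inner
product `Re⟨·,·⟩`. -/
def RealSymm (B : W →ₗ[ℝ] W) : Prop :=
  ∀ x y : W, (inner ℂ (B x) y : ℂ).re = (inner ℂ x (B y) : ℂ).re

/-- Membership in `H₊(W)`: symmetric, commutes with `J`, `σBσ = B`. -/
def MemHplus (σ B : W →ₗ[ℝ] W) : Prop :=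
  RealSymm B ∧ (∀ x, B (Complex.I • x) = Complex.I • B x) ∧ (∀ x, σ (B (σ x)) = B x)

/-- Membership in `H₋(W)`: symmetric, commutes with `J`, `σBσ = -B`. -/
def MemHminus (σ B : W →ₗ[ℝ] W) : Prop :=
  RealSymm B ∧ (∀ x, B (Complex.I • x) = Complex.I • B x) ∧ (∀ x, σ (B (σ x)) = -B x)

/-- Membership in `σH₊(W)`: symmetric, anticommutes with `J`, `σBσ = B`. -/
def MemSigmaHplus (σ B : W →ₗ[ℝ] W) : Prop :=
  RealSymm B ∧ (∀ x, B (Complex.I • x) = -(Complex.I • B x)) ∧ (∀ x, σ (B (σ x)) = B x)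

/-- Membership in `JσH₊(W)`: symmetric, anticommutes with `J`, `σBσ = -B`. -/
def MemJSigmaHplus (σ B : W →ₗ[ℝ] W) : Prop :=
  RealSymm B ∧ (∀ x, B (Complex.I • x) = -(Complex.I • B x)) ∧ (∀ x, σ (B (σ x)) = -B x)

section Decomposition

variable {K E : Type*} [Field K] [CharZero K] [AddCommGroup E] [Module K E]

/-- The components are the joint eigenprojections `¼ (1 ± φ)(1 ± ψ) x`. -/
theorem Module.End.existsUnique_eigenDecomp_of_commute {φ ψ : Module.End K E}
    (hφ : φ * φ = 1) (hψ : ψ * ψ = 1) (hφψ : Commute φ ψ) {S : Submodule K E}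
    (hSφ : ∀ x ∈ S, φ x ∈ S) (hSψ : ∀ x ∈ S, ψ x ∈ S) {x : E} (hx : x ∈ S) :
    ∃! p : E × E × E × E,
      (p.1 ∈ S ∧ φ p.1 = p.1 ∧ ψ p.1 = p.1) ∧
      (p.2.1 ∈ S ∧ φ p.2.1 = p.2.1 ∧ ψ p.2.1 = -p.2.1) ∧
      (p.2.2.1 ∈ S ∧ φ p.2.2.1 = -p.2.2.1 ∧ ψ p.2.2.1 = p.2.2.1) ∧
      (p.2.2.2 ∈ S ∧ φ p.2.2.2 = -p.2.2.2 ∧ ψ p.2.2.2 = -p.2.2.2) ∧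
      x = p.1 + p.2.1 + p.2.2.1 + p.2.2.2 := by
  have hφφ (y : E) : φ (φ y) = y := by rw [← Module.End.mul_apply, hφ, Module.End.one_apply]
  have hψψ (y : E) : ψ (ψ y) = y := by rw [← Module.End.mul_apply, hψ, Module.End.one_apply]
  have hψφ (y : E) : ψ (φ y) = φ (ψ y) := by
    rw [← Module.End.mul_apply, ← hφψ.eq, Module.End.mul_apply]
  have h₁ : φ x ∈ S := hSφ x hx
  have h₂ : ψ x ∈ S := hSψ x hx
  have h₃ : φ (ψ x) ∈ S := hSφ _ h₂
  refine ⟨((4 : K)⁻¹ • (x + φ x + ψ x + φ (ψ x)), (4 : K)⁻¹ • (x + φ x - ψ x - φ (ψ x)),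
      (4 : K)⁻¹ • (x - φ x + ψ x - φ (ψ x)), (4 : K)⁻¹ • (x - φ x - ψ x + φ (ψ x))),
    ⟨⟨?_, ?_, ?_⟩, ⟨?_, ?_, ?_⟩, ⟨?_, ?_, ?_⟩, ⟨?_, ?_, ?_⟩, ?_⟩, ?_⟩
  any_goals exact S.smul_mem _ (by apply_rules [S.add_mem, S.sub_mem])
  any_goals simp only [map_smul, map_add, map_sub, hφφ, hψφ, hψψ]; module
  rintro ⟨a, b, c, d⟩ ⟨⟨-, ha, ha'⟩, ⟨-, hb, hb'⟩, ⟨-, hc, hc'⟩, ⟨-, hd, hd'⟩, rfl⟩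
  simp only [map_add, map_neg, ha, hb, hc, hd, ha', hb', hc', hd', Prod.mk.injEq]
  refine ⟨?_, ?_, ?_, ?_⟩ <;> module

end Decomposition

section Trace

variable {K V : Type*} [Field K] [CharZero K] [AddCommGroup V] [Module K V]

/-- Conjugation preserves traces, while it negates `B * C`. -/
theorem LinearMap.trace_mul_eq_zero_of_mulLeftRight {T T' B C : Module.End K V}
    (h₁ : T * T' = 1) (h₂ : T' * T = 1) (hB : mulLeftRight K (T, T') B = B)
    (hC : mulLeftRight K (T, T') C = -C) : trace K V (B * C) = 0 := by
  rw [mulLeftRight_apply] at hB hC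
  have hBC : T * (B * C) * T' = -(B * C) := calc
    T * (B * C) * T' = (T * B * T') * (T * C * T') := by
      simp only [mul_assoc]; rw [← mul_assoc T' T, h₂, one_mul]
    _ = -(B * C) := by rw [hB, hC, mul_neg]
  have := trace_conj (g := B * C) (f := ⟨T, T', h₁, h₂⟩)
  rw [Units.inv_mk, Units.val_mk, hBC, map_neg] at this
  exact CharZero.neg_eq_self_iff.1 this

end Trace

theorem LinearMap.mulLeftRight_self_apply_eq_iff {R M : Type*} [CommSemiring R] [AddCommMonoid M]
    [Module R M] (T B C : Module.End R M) :
    mulLeftRight R (T, T) B = C ↔ ∀ x, T (B (T x)) = C x := by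
  simp only [mulLeftRight_apply, LinearMap.ext_iff, Module.End.mul_apply]

theorem LinearMap.mulLeftRight_self_mul_self {R A : Type*} [CommSemiring R] [Semiring A]
    [Algebra R A] {T : A} (hT : T * T = 1) :
    mulLeftRight R (T, T) * mulLeftRight R (T, T) = 1 := by
  ext B
  simp only [Module.End.mul_apply, mulLeftRight_apply, Module.End.one_apply, mul_assoc]
  rw [← mul_assoc T T, hT, one_mul, mul_one]

section ComplexStructure

open LinearMap

/-- The complex structure `J` of `W_ℝ`. -/
noncomputable def smulI : Module.End ℝ W := Complex.I • 1

@[simp] theorem smulI_apply (x : W) : smulI x = Complex.I • x := rfl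

theorem smulI_mul_neg_smulI : smulI * -smulI = (1 : Module.End ℝ W) := by
  ext x; simp [smul_smul]

theorem neg_smulI_mul_smulI : -smulI * smulI = (1 : Module.End ℝ W) := by
  ext x; simp [smul_smul]

theorem mulLeftRight_smulI_mul_self :
    mulLeftRight ℝ (smulI, -smulI) * mulLeftRight ℝ (smulI, -smulI) =
      (1 : Module.End ℝ (Module.End ℝ W)) := by
  ext B x; simp [mulLeftRight_apply, smul_smul]

theorem mulLeftRight_smulI_apply_eq_self_iff (B : W →ₗ[ℝ] W) :
    mulLeftRight ℝ (smulI, -smulI) B = B ↔ ∀ x, B (Complex.I • x) = Complex.I • B x := by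
  rw [mulLeftRight_apply, LinearMap.ext_iff]
  refine ⟨fun h x => ?_, fun h x => ?_⟩
  · simpa [smul_smul] using (h (Complex.I • x)).symm
  · simp [h, smul_smul]

theorem mulLeftRight_smulI_apply_eq_neg_iff (B : W →ₗ[ℝ] W) :
    mulLeftRight ℝ (smulI, -smulI) B = -B ↔ ∀ x, B (Complex.I • x) = -(Complex.I • B x) := by
  rw [mulLeftRight_apply, LinearMap.ext_iff]
  refine ⟨fun h x => ?_, fun h x => ?_⟩
  · simpa [smul_smul, neg_eq_iff_eq_neg] using (h (Complex.I • x)).symm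
  · simp [h, smul_smul]

theorem commute_mulLeftRight_smulI {σ : W →ₗ[ℝ] W}
    (hσ : ∀ x : W, σ (Complex.I • x) = -(Complex.I • σ x)) :
    Commute (mulLeftRight ℝ (smulI, -smulI)) (mulLeftRight ℝ (σ, σ)) := by
  ext B x; simp [mulLeftRight_apply, hσ]

def realSymmSubmodule : Submodule ℝ (Module.End ℝ W) where
  carrier := {B | RealSymm B}
  add_mem' hB hC x y := by simp [hB x y, hC x y]
  zero_mem' x y := by simp
  smul_mem' r B hB x y := by simp [← Complex.coe_smul, hB x y, mul_comm]

theorem RealSymm.mul_mul {B T T' : Module.End ℝ W} (hB : RealSymm B)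
    (hT : ∀ u v, (inner ℂ (T u) v).re = (inner ℂ u (T' v)).re) : RealSymm (T * B * T') :=
  fun x y => calc
    (inner ℂ (T (B (T' x))) y).re = (inner ℂ (B (T' x)) (T' y)).re := hT _ _
    _ = (inner ℂ (T' x) (B (T' y))).re := hB _ _
    _ = (inner ℂ x (T (B (T' y)))).re := by
      rw [← Complex.conj_re, inner_conj_symm, ← hT, ← Complex.conj_re, inner_conj_symm]

theorem re_inner_smulI_left (u v : W) :
    (inner ℂ (smulI u) v).re = (inner ℂ u ((-smulI) v)).re := by
  simp [inner_smul_right]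

theorem memHplus_iff {σ B : W →ₗ[ℝ] W} : MemHplus σ B ↔ B ∈ realSymmSubmodule ∧
    mulLeftRight ℝ (smulI, -smulI) B = B ∧ mulLeftRight ℝ (σ, σ) B = B := by
  rw [MemHplus, mulLeftRight_smulI_apply_eq_self_iff, mulLeftRight_self_apply_eq_iff]; rfl

theorem memHminus_iff {σ B : W →ₗ[ℝ] W} : MemHminus σ B ↔ B ∈ realSymmSubmodule ∧
    mulLeftRight ℝ (smulI, -smulI) B = B ∧ mulLeftRight ℝ (σ, σ) B = -B := by
  rw [MemHminus, mulLeftRight_smulI_apply_eq_self_iff, mulLeftRight_self_apply_eq_iff]; rfl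

theorem memSigmaHplus_iff {σ B : W →ₗ[ℝ] W} : MemSigmaHplus σ B ↔ B ∈ realSymmSubmodule ∧
    mulLeftRight ℝ (smulI, -smulI) B = -B ∧ mulLeftRight ℝ (σ, σ) B = B := by
  rw [MemSigmaHplus, mulLeftRight_smulI_apply_eq_neg_iff, mulLeftRight_self_apply_eq_iff]; rfl

theorem memJSigmaHplus_iff {σ B : W →ₗ[ℝ] W} : MemJSigmaHplus σ B ↔ B ∈ realSymmSubmodule ∧
    mulLeftRight ℝ (smulI, -smulI) B = -B ∧ mulLeftRight ℝ (σ, σ) B = -B := by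
  rw [MemJSigmaHplus, mulLeftRight_smulI_apply_eq_neg_iff, mulLeftRight_self_apply_eq_iff]; rfl

end ComplexStructure

theorem stmt11_general
    (σ : W →ₗ[ℝ] W)
    (hanti : ∀ (c : ℂ) (v : W), σ (c • v) = (starRingEnd ℂ c) • σ v)
    (hinvol : ∀ v, σ (σ v) = v)
    (hcompat : ∀ x y : W, (inner ℂ (σ x) (σ y) : ℂ) = inner ℂ y x) :
    (∀ B : W →ₗ[ℝ] W, RealSymm B →
      ∃! p : (W →ₗ[ℝ] W) × (W →ₗ[ℝ] W) × (W →ₗ[ℝ] W) × (W →ₗ[ℝ] W),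
        MemHplus σ p.1 ∧ MemHminus σ p.2.1 ∧ MemSigmaHplus σ p.2.2.1 ∧
          MemJSigmaHplus σ p.2.2.2 ∧ B = p.1 + p.2.1 + p.2.2.1 + p.2.2.2) ∧
    (∀ B C : W →ₗ[ℝ] W, MemHplus σ B → MemHminus σ C →
      LinearMap.trace ℝ W (B ∘ₗ C) = 0) ∧
    (∀ B C : W →ₗ[ℝ] W, MemHplus σ B → MemSigmaHplus σ C →
      LinearMap.trace ℝ W (B ∘ₗ C) = 0) ∧
    (∀ B C : W →ₗ[ℝ] W, MemHplus σ B → MemJSigmaHplus σ C →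
      LinearMap.trace ℝ W (B ∘ₗ C) = 0) ∧
    (∀ B C : W →ₗ[ℝ] W, MemHminus σ B → MemSigmaHplus σ C →
      LinearMap.trace ℝ W (B ∘ₗ C) = 0) ∧
    (∀ B C : W →ₗ[ℝ] W, MemHminus σ B → MemJSigmaHplus σ C →
      LinearMap.trace ℝ W (B ∘ₗ C) = 0) ∧
    (∀ B C : W →ₗ[ℝ] W, MemSigmaHplus σ B → MemJSigmaHplus σ C →
      LinearMap.trace ℝ W (B ∘ₗ C) = 0) := by
  have hσσ : σ * σ = 1 := LinearMap.ext hinvol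
  have hσI (x : W) : σ (Complex.I • x) = -(Complex.I • σ x) := by
    rw [hanti, Complex.conj_I, neg_smul]
  have hσ_re (u v : W) : (inner ℂ (σ u) v).re = (inner ℂ u (σ v)).re := by
    rw [← hinvol v, hcompat, hinvol, ← Complex.conj_re, inner_conj_symm]
  have orthJ {B C : Module.End ℝ W} :=
    LinearMap.trace_mul_eq_zero_of_mulLeftRight (B := B) (C := C)
      smulI_mul_neg_smulI neg_smulI_mul_smulI
  have orthσ {B C : Module.End ℝ W} :=
    LinearMap.trace_mul_eq_zero_of_mulLeftRight (B := B) (C := C) hσσ hσσ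
  refine ⟨fun B hB => ?_, ?_, ?_, ?_, ?_, ?_, ?_⟩
  · simp only [memHplus_iff, memHminus_iff, memSigmaHplus_iff, memJSigmaHplus_iff]
    exact Module.End.existsUnique_eigenDecomp_of_commute mulLeftRight_smulI_mul_self
      (LinearMap.mulLeftRight_self_mul_self hσσ) (commute_mulLeftRight_smulI hσI)
      (fun C hC => RealSymm.mul_mul hC re_inner_smulI_left)
      (fun C hC => RealSymm.mul_mul hC hσ_re) hB
  all_goals intro B C hB hC
  · exact orthσ (memHplus_iff.1 hB).2.2 (memHminus_iff.1 hC).2.2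
  · exact orthJ (memHplus_iff.1 hB).2.1 (memSigmaHplus_iff.1 hC).2.1
  · exact orthJ (memHplus_iff.1 hB).2.1 (memJSigmaHplus_iff.1 hC).2.1
  · exact orthJ (memHminus_iff.1 hB).2.1 (memSigmaHplus_iff.1 hC).2.1
  · exact orthJ (memHminus_iff.1 hB).2.1 (memJSigmaHplus_iff.1 hC).2.1
  · exact orthσ (memSigmaHplus_iff.1 hB).2.2 (memJSigmaHplus_iff.1 hC).2.2

/-- with `W`, `σ`, `J` as in Statement 9, the space `S(W_ℝ)` of symmetric
endomorphisms of the real inner product space `W_ℝ` decomposes orthogonally (for the trace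
inner product) as `S(W_ℝ) = H₊(W) ⊕ H₋(W) ⊕ σH₊(W) ⊕ JσH₊(W)`: every symmetric `B` is
uniquely the sum of four symmetric operators in the respective subspaces, and the four
subspaces are pairwise orthogonal for `(A, B) ↦ trace (A ∘ B)`. -/
theorem stmt11 [FiniteDimensional ℂ W]
    (σ : W →ₗ[ℝ] W)
    (hanti : ∀ (c : ℂ) (v : W), σ (c • v) = (starRingEnd ℂ c) • σ v)
    (hinvol : ∀ v, σ (σ v) = v)
    (hcompat : ∀ x y : W, (inner ℂ (σ x) (σ y) : ℂ) = inner ℂ y x) :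
    (∀ B : W →ₗ[ℝ] W, RealSymm B →
      ∃! p : (W →ₗ[ℝ] W) × (W →ₗ[ℝ] W) × (W →ₗ[ℝ] W) × (W →ₗ[ℝ] W),
        MemHplus σ p.1 ∧ MemHminus σ p.2.1 ∧ MemSigmaHplus σ p.2.2.1 ∧
          MemJSigmaHplus σ p.2.2.2 ∧ B = p.1 + p.2.1 + p.2.2.1 + p.2.2.2) ∧
    (∀ B C : W →ₗ[ℝ] W, MemHplus σ B → MemHminus σ C →
      LinearMap.trace ℝ W (B ∘ₗ C) = 0) ∧
    (∀ B C : W →ₗ[ℝ] W, MemHplus σ B → MemSigmaHplus σ C →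
      LinearMap.trace ℝ W (B ∘ₗ C) = 0) ∧
    (∀ B C : W →ₗ[ℝ] W, MemHplus σ B → MemJSigmaHplus σ C →
      LinearMap.trace ℝ W (B ∘ₗ C) = 0) ∧
    (∀ B C : W →ₗ[ℝ] W, MemHminus σ B → MemSigmaHplus σ C →
      LinearMap.trace ℝ W (B ∘ₗ C) = 0) ∧
    (∀ B C : W →ₗ[ℝ] W, MemHminus σ B → MemJSigmaHplus σ C →
      LinearMap.trace ℝ W (B ∘ₗ C) = 0) ∧
    (∀ B C : W →ₗ[ℝ] W, MemSigmaHplus σ B → MemJSigmaHplus σ C →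
      LinearMap.trace ℝ W (B ∘ₗ C) = 0) :=
  stmt11_general σ hanti hinvol hcompat

end
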